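/- arXiv:2512.11601 — 5 statements merged into one kernel-verified Lean document; each statement's English description precedes it below -/
import Mathlib

section
/- The Hofstadter G-sequence, defined by h(0)=0 and h(n)=n-h(h(n-1)) for n≥1, satisfies h(n) = ⌊(n+1)/φ⌋ = ⌊(n+1)φ⌋ - n - 1 for all n ≥ 1, where φ = (1+√5)/2. -/
/-!
With `α = 1/φ` we have `α² = 1 - α`. Writing `m = ⌊nα⌋` and `f = nα - m`, this gives
`(m + 1)α = n - m + α - f(1 + α)`, so `⌊(m + 1)α⌋` is `n - m` or `n - m - 1` according as
`f < 1 - α` or `f > 1 - α`, exactly when `⌊(n + 1)α⌋` is `m` or `m + 1`. Hence `n ↦ ⌊(n + 1)α⌋`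
satisfies the recursion `h(n) = n - h(h(n - 1))`, which determines `h`. The second formula
follows from `φ = 1/φ + 1`.
-/

noncomputable def phi : ℝ := (1 + Real.sqrt 5) / 2

open Real
open scoped goldenRatio

lemma inv_goldenRatio_eq_sub_one : φ⁻¹ = φ - 1 := by
  rw [inv_goldenRatio]
  linarith [goldenRatio_add_goldenConj]

lemma inv_goldenRatio_sq : φ⁻¹ ^ 2 = 1 - φ⁻¹ := by
  rw [inv_goldenRatio_eq_sub_one]
  linear_combination goldenRatio_sq

theorem floor_succ_div_goldenRatio_add_floor (n : ℕ) :
    ⌊((n : ℝ) + 1) / φ⌋ + ⌊((⌊(n : ℝ) / φ⌋ : ℝ) + 1) / φ⌋ = n := by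
  rw [div_eq_mul_inv, div_eq_mul_inv, div_eq_mul_inv]
  have hα₀ : 0 < φ⁻¹ := inv_pos.mpr goldenRatio_pos
  have hα₁ : φ⁻¹ < 1 := inv_lt_one_of_one_lt₀ one_lt_goldenRatio
  have hsq : φ⁻¹ ^ 2 = 1 - φ⁻¹ := inv_goldenRatio_sq
  have hirr : Irrational φ⁻¹ := goldenRatio_irrational.inv
  generalize φ⁻¹ = α at *
  set m := ⌊(n : ℝ) * α⌋
  set f := (n : ℝ) * α - m
  have hf₀ : 0 ≤ f := sub_nonneg.mpr (Int.floor_le _)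
  have hf₁ : f < 1 := by linarith [Int.lt_floor_add_one ((n : ℝ) * α)]
  have hnext : ((n : ℝ) + 1) * α = m + f + α := by ring
  have hshift : ((m : ℝ) + 1) * α = n - m + α - f * (1 + α) := by
    linear_combination (n : ℝ) * hsq
  -- `f = 1 - α` would make `(n + 1)α = m + 1` an integer.
  have hf_ne : f ≠ 1 - α := by
    intro hf_eq
    refine (hirr.natCast_mul n.succ_ne_zero).ne_int (m + 1) ?_
    push_cast
    linarith
  rcases hf_ne.lt_or_gt with hf_lt | hf_gt
  · have hprod : f * (1 + α) < α := by nlinarith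
    have e₁ : ⌊((n : ℝ) + 1) * α⌋ = m := by
      rw [Int.floor_eq_iff]; constructor <;> linarith
    have e₂ : ⌊((m : ℝ) + 1) * α⌋ = n - m := by
      rw [Int.floor_eq_iff]; push_cast; constructor <;> nlinarith
    rw [e₁, e₂]; ring
  · have hprod : α < f * (1 + α) := by nlinarith
    have e₁ : ⌊((n : ℝ) + 1) * α⌋ = m + 1 := by
      rw [Int.floor_eq_iff]; push_cast; constructor <;> linarith
    have e₂ : ⌊((m : ℝ) + 1) * α⌋ = n - m - 1 := by
      rw [Int.floor_eq_iff]; push_cast; constructor <;> nlinarith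
    rw [e₁, e₂]; ring

lemma floor_succ_div_goldenRatio_le (n : ℕ) : ⌊((n : ℝ) + 1) / φ⌋ ≤ n := by
  rw [Int.floor_le_iff]
  push_cast
  exact div_lt_self (by positivity) one_lt_goldenRatio

theorem hofstadter_eq_floor_succ_div_goldenRatio (h : ℕ → ℕ) (h0 : h 0 = 0)
    (hrec : ∀ n : ℕ, 1 ≤ n → h n = n - h (h (n - 1))) (n : ℕ) :
    (h n : ℤ) = ⌊((n : ℝ) + 1) / φ⌋ := by
  induction n using Nat.strong_induction_on with
  | _ n ih =>
  rcases n with _ | k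
  · rw [h0, Nat.cast_zero, eq_comm, Int.floor_eq_zero_iff]
    refine ⟨by positivity, (div_lt_one goldenRatio_pos).mpr ?_⟩
    rw [Nat.cast_zero, zero_add]
    exact one_lt_goldenRatio
  · have hk := ih k k.lt_succ_self
    have hk_le := floor_succ_div_goldenRatio_le k
    have hhk := ih (h k) (by omega)
    rw [show ((h k : ℕ) : ℝ) = (⌊((k : ℝ) + 1) / φ⌋ : ℝ) by exact_mod_cast hk] at hhk
    have hsum := floor_succ_div_goldenRatio_add_floor (k + 1)
    push_cast at hsum
    have hnonneg : 0 ≤ ⌊((k : ℝ) + 1 + 1) / φ⌋ := Int.floor_nonneg.mpr (by positivity)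
    rw [hrec (k + 1) k.succ_pos, Nat.add_sub_cancel]
    push_cast
    omega

/-- The Hofstadter G-sequence `h(0)=0`, `h(n)=n-h(h(n-1))` satisfies
    `h(n) = ⌊(n+1)/φ⌋ = ⌊(n+1)φ⌋ - n - 1` for all `n ≥ 1`. -/
theorem hofstadter_G_floor (h : ℕ → ℕ)
    (h0 : h 0 = 0)
    (hrec : ∀ n : ℕ, 1 ≤ n → h n = n - h (h (n - 1))) :
    ∀ n : ℕ, 1 ≤ n →
      (h n : ℤ) = ⌊((n : ℝ) + 1) / phi⌋ ∧
      (h n : ℤ) = ⌊((n : ℝ) + 1) * phi⌋ - n - 1 := by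
  intro n _
  have hfloor := hofstadter_eq_floor_succ_div_goldenRatio h h0 hrec n
  have hphi : phi = φ := rfl
  refine ⟨hphi ▸ hfloor, ?_⟩
  have hsplit : ((n : ℝ) + 1) * phi = ((n : ℝ) + 1) / φ + ((n + 1 : ℕ) : ℝ) := by
    rw [hphi, div_eq_mul_inv, inv_goldenRatio_eq_sub_one]
    push_cast
    ring
  rw [hsplit, Int.floor_add_natCast, ← hfloor]
  push_cast
  ring
end

section
/- For every ℓ ≥ 1, the sequences (a_n) and (b_n) defined by a_0 = ℓ+1, b_0 = 2ℓ+2, and for n ≥ 1, a_n = mex({a_i, b_i : i < n} ∪ {0,1,…,ℓ}) and b_n = a_n + n + ℓ + 1, are both strictly increasing. -/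
/-- The minimum excluded value of a set of natural numbers. -/
noncomputable def mex (S : Set ℕ) : ℕ := sInf {m : ℕ | m ∉ S}

/-- `MexSeq ℓ a b` says that `a`, `b` are the sequences defined by
    `a 0 = ℓ+1`, `b 0 = 2ℓ+2`, and for `n ≥ 1`:
    `a n = mex({a i, b i : i < n} ∪ {0,…,ℓ})`, `b n = a n + n + ℓ + 1`. -/
def MexSeq (ℓ : ℕ) (a b : ℕ → ℕ) : Prop :=
  a 0 = ℓ + 1 ∧ b 0 = 2 * ℓ + 2 ∧
  (∀ n : ℕ, 1 ≤ n →
    a n = mex ({m : ℕ | ∃ i < n, m = a i ∨ m = b i} ∪ {m : ℕ | m ≤ ℓ})) ∧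
  (∀ n : ℕ, 1 ≤ n → b n = a n + n + ℓ + 1)

/-! Both sequences are read off the increasing family of finite sets
`E n = {a i, b i : i < n} ∪ {0,…,ℓ}` with `a n = mex (E n)` (also for `n = 0`). Since `E n ⊆ E (n+1)`,
the mex cannot decrease, and it cannot stay put because `a n ∈ E (n+1)`; so `a` is strictly
increasing, and then so is `b n = a n + n + ℓ + 1`. -/

lemma mex_notMem {S : Set ℕ} (hS : S.Finite) : mex S ∉ S :=
  Nat.sInf_mem hS.infinite_compl.nonempty

lemma lt_mex_of_forall_le_mem {S : Set ℕ} (hS : S.Finite) {k : ℕ} (hk : ∀ m ≤ k, m ∈ S) :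
    k < mex S :=
  lt_of_not_ge fun h => mex_notMem hS (hk _ h)

lemma mex_le_mex {S T : Set ℕ} (hT : T.Finite) (hST : S ⊆ T) : mex S ≤ mex T :=
  Nat.sInf_le fun h => mex_notMem hT (hST h)

lemma mex_Iic (ℓ : ℕ) : mex (Set.Iic ℓ) = ℓ + 1 :=
  le_antisymm (Nat.sInf_le (by simp)) (lt_mex_of_forall_le_mem (Set.finite_Iic ℓ) fun _ => id)

lemma strictMono_mex_of_mem_succ {S : ℕ → Set ℕ} (hS : Monotone S) (hfin : ∀ n, (S n).Finite)
    (hmem : ∀ n, mex (S n) ∈ S (n + 1)) : StrictMono fun n => mex (S n) :=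
  strictMono_nat_of_lt_succ fun n =>
    lt_of_le_of_ne (mex_le_mex (hfin _) (hS n.le_succ))
      fun h => mex_notMem (hfin _) (h ▸ hmem n)

namespace MexSeq

variable {ℓ : ℕ} {a b : ℕ → ℕ}

def excluded (ℓ : ℕ) (a b : ℕ → ℕ) (n : ℕ) : Set ℕ :=
  a '' Set.Iio n ∪ b '' Set.Iio n ∪ Set.Iic ℓ

lemma excluded_finite (n : ℕ) : (excluded ℓ a b n).Finite :=
  (((Set.finite_Iio n).image a).union ((Set.finite_Iio n).image b)).union (Set.finite_Iic ℓ)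

lemma excluded_mono : Monotone (excluded ℓ a b) := fun _ _ h => by
  unfold excluded
  gcongr

lemma apply_mem_excluded_succ (n : ℕ) : a n ∈ excluded ℓ a b (n + 1) :=
  Or.inl (Or.inl ⟨n, Nat.lt_succ_self n, rfl⟩)

lemma a_eq_mex_excluded (hab : MexSeq ℓ a b) (n : ℕ) : a n = mex (excluded ℓ a b n) := by
  obtain ⟨ha0, -, ha, -⟩ := hab
  rcases Nat.eq_zero_or_pos n with rfl | hn
  · simp [excluded, ha0, mex_Iic]
  · rw [ha n hn]
    congr 1
    ext m
    simp only [excluded, Set.mem_union, Set.mem_ofPred_eq, Set.mem_image, Set.mem_Iio,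
      Set.mem_Iic]
    grind

lemma b_eq_add (hab : MexSeq ℓ a b) (n : ℕ) : b n = a n + n + ℓ + 1 := by
  obtain ⟨ha0, hb0, -, hb⟩ := hab
  rcases Nat.eq_zero_or_pos n with rfl | hn
  · omega
  · exact hb n hn

end MexSeq

theorem mexSeq_strictMono_general (ℓ : ℕ) (a b : ℕ → ℕ)
    (hab : MexSeq ℓ a b) : StrictMono a ∧ StrictMono b := by
  have ha : StrictMono a := by
    rw [show a = fun n => mex (MexSeq.excluded ℓ a b n) from funext hab.a_eq_mex_excluded]
    exact strictMono_mex_of_mem_succ MexSeq.excluded_mono MexSeq.excluded_finite fun n =>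
      hab.a_eq_mex_excluded n ▸ MexSeq.apply_mem_excluded_succ n
  refine ⟨ha, ?_⟩
  rw [show b = fun n => a n + n + ℓ + 1 from funext hab.b_eq_add]
  exact ((ha.add_monotone monotone_id).add_const ℓ).add_const 1

theorem mexSeq_strictMono (ℓ : ℕ) (hℓ : 1 ≤ ℓ) (a b : ℕ → ℕ)
    (hab : MexSeq ℓ a b) : StrictMono a ∧ StrictMono b :=
  mexSeq_strictMono_general ℓ a b hab
end

section
/- Consider the game K¹ on ℕ² with Wythoff moves (from (x,y) one may move to (x-n,y), (x,y-n), or (x-n,y-n) for n > 0, staying in ℕ²), where positions (x,y) with x + y ≤ 1 are terminal (no moves allowed from them, and they are P-positions by convention being losing for the mover). Then a position (a,b) with a ≤ b and a + b ≥ 2 is a P-position if and only if the Zeckendorf (Fibonacci) representation of a ends in 0 and rep_F(b) = rep_F(a)·1, i.e., b is obtained from a by shifting the Zeckendorf representation left and adding 1. -/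
/-- Value of a list of Fibonacci digits, least significant digit first,
    digit `i` having weight `F_i` where `F_0 = 1, F_1 = 2, F_{k+2}=F_{k+1}+F_k`
    (i.e. `F_i = fib (i+2)` for Mathlib's `Nat.fib`). -/
def zvalAux : ℕ → List Bool → ℕ
  | _, [] => 0
  | k, d :: L => (if d then Nat.fib k else 0) + zvalAux (k + 1) L

def zval (L : List Bool) : ℕ := zvalAux 2 L

/-- `ZeckRep n L` : `L` (least significant digit first) is the Zeckendorf
    (greedy Fibonacci) representation of `n`: correct value, no two adjacent
    `1`s, and nonzero leading (most significant) digit. -/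
def ZeckRep (n : ℕ) (L : List Bool) : Prop :=
  zval L = n ∧ List.Chain' (fun x y => ¬(x = true ∧ y = true)) L ∧
    L.getLast? ≠ some false

/-- A move of the game `K¹`: a Wythoff move from a non-terminal position
    (a position `(x,y)` with `x + y > 1`). -/
def K1Move (p q : ℕ × ℕ) : Prop :=
  1 < p.1 + p.2 ∧
  ((q.1 = p.1 ∧ q.2 < p.2) ∨ (q.1 < p.1 ∧ q.2 = p.2) ∨
   (q.1 < p.1 ∧ q.2 < p.2 ∧ p.1 - q.1 = p.2 - q.2))

/-! For `m ≥ 1` let `A m`, `B m` be the numbers with `rep_F (A m) = rep_F m · 0` and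
`rep_F (B m) = rep_F m · 01`, so that `B m = A m + m + 1`; the claimed P-positions with `a ≤ b`
are the pairs `(A m, B m)`. By uniqueness of Zeckendorf representations the `A`- and `B`-values
are disjoint, each value determines its pair, and every `x ≥ 2` is an `A`- or a `B`-value.
Appending a `0` is strictly monotone on representations, because for digit strings without two
adjacent `1`s the value order is the order by length and then reverse-lexicographic, whatever
the shift of the digit weights; so `A` is increasing. As for Wythoff's game, these facts make
the pairs, their mirror images and the terminal positions a stable and absorbing set, and since
every move decreases `x + y` there is only one such set. -/

open Nat List

def NoConsecutiveOnes (L : List Bool) : Prop :=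
  L.IsChain (fun x y => ¬(x = true ∧ y = true))

def IsZeckDigits (L : List Bool) : Prop :=
  NoConsecutiveOnes L ∧ L.getLast? ≠ some false

section Digits

variable {k : ℕ} {L L' : List Bool}

theorem zvalAux_append (k : ℕ) (M L : List Bool) :
    zvalAux k (M ++ L) = zvalAux k M + zvalAux (k + M.length) L := by
  induction M generalizing k with
  | nil => simp [zvalAux]
  | cons d M ih =>
    simp only [cons_append, zvalAux, ih, length_cons]
    rw [Nat.add_assoc, Nat.add_comm 1 M.length, Nat.add_assoc]

theorem zvalAux_append_singleton (k : ℕ) (M : List Bool) (d : Bool) :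
    zvalAux k (M ++ [d]) = zvalAux k M + if d then fib (k + M.length) else 0 := by
  simp [zvalAux_append, zvalAux]

theorem zvalAux_add_two (k : ℕ) (L : List Bool) :
    zvalAux (k + 2) L = zvalAux (k + 1) L + zvalAux k L := by
  induction L generalizing k with
  | nil => rfl
  | cons d L ih =>
    simp only [zvalAux, ih (k + 1)]
    cases d
    · simp
    · simp [fib_add_two]; omega

theorem zvalAux_add_fib_le : ∀ {L : List Bool}, NoConsecutiveOnes L → ∀ k,
    zvalAux (k + 1) L + fib k ≤ fib (k + 1 + L.length)
  | [], _, k => by simpa [zvalAux] using fib_le_fib_succ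
  | [true], _, k => by
    show fib (k + 1) + 0 + fib k ≤ fib (k + 1 + 1)
    rw [fib_add_two]
    omega
  | false :: L, h, k => by
    have ih := zvalAux_add_fib_le (isChain_cons.mp h).2 (k + 1)
    have := fib_le_fib_succ (n := k)
    simp only [zvalAux, length_cons, Bool.false_eq_true, if_false] at ih ⊢
    ring_nf at ih this ⊢
    omega
  | true :: false :: L, h, k => by
    have ih := zvalAux_add_fib_le (isChain_cons.mp (isChain_cons_cons.mp h).2).2 (k + 2)
    have := fib_add_two (n := k)
    simp only [zvalAux, length_cons, Bool.false_eq_true, if_false, if_true] at ih ⊢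
    ring_nf at ih this ⊢
    omega
  | true :: true :: _, h, _ => absurd (isChain_cons_cons.mp h).1 (by simp)

theorem NoConsecutiveOnes.zvalAux_lt_fib (hL : NoConsecutiveOnes L) (hk : 2 ≤ k) :
    zvalAux k L < fib (k + L.length) := by
  obtain ⟨k, rfl⟩ : ∃ j, k = j + 1 := ⟨k - 1, by omega⟩
  have := zvalAux_add_fib_le hL k
  have : 0 < fib k := fib_pos.2 (by omega)
  omega

theorem NoConsecutiveOnes.of_append {M : List Bool} (h : NoConsecutiveOnes (M ++ L)) :
    NoConsecutiveOnes M :=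
  (isChain_append.mp h).1

theorem zvalAux_lt_iff_reverse_lt (hk : 2 ≤ k) (hL : NoConsecutiveOnes L)
    (hL' : NoConsecutiveOnes L') (hlen : L.length = L'.length) :
    zvalAux k L < zvalAux k L' ↔ L.reverse < L'.reverse := by
  induction L using List.reverseRecOn generalizing L' with
  | nil =>
    rw [eq_nil_of_length_eq_zero hlen.symm]
    simp
  | append_singleton M d ih =>
    obtain rfl | ⟨M', d', rfl⟩ := L'.eq_nil_or_concat'
    · simp at hlen
    have hlen' : M.length = M'.length := by simpa using hlen
    have hM := hL.of_append
    have hM' := hL'.of_append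
    have hMlt := hM.zvalAux_lt_fib hk
    have hM'lt := hM'.zvalAux_lt_fib hk
    rw [hlen'] at hMlt
    simp only [zvalAux_append_singleton, reverse_append, reverse_singleton, singleton_append,
      cons_lt_cons_iff, hlen', ← ih hM hM' hlen']
    cases d <;> cases d' <;> simp +decide <;> omega

theorem IsZeckDigits.eq_nil_or_eq_append_true (h : IsZeckDigits L) :
    L = [] ∨ ∃ M, L = M ++ [true] := by
  obtain rfl | ⟨M, d, rfl⟩ := L.eq_nil_or_concat'
  · exact .inl rfl
  · cases d
    · exact absurd (by simp) h.2
    · exact .inr ⟨M, rfl⟩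

theorem IsZeckDigits.fib_le_zvalAux (h : IsZeckDigits L) {n : ℕ} (hn : n < L.length) :
    fib (k + n) ≤ zvalAux k L := by
  obtain rfl | ⟨M, rfl⟩ := h.eq_nil_or_eq_append_true
  · simp at hn
  · rw [zvalAux_append_singleton, if_pos rfl]
    have : fib (k + n) ≤ fib (k + M.length) := fib_mono (by simp at hn; omega)
    omega

theorem zvalAux_lt_of_length_lt (hL : NoConsecutiveOnes L) (hL' : IsZeckDigits L')
    (hk : 2 ≤ k) (hlen : L.length < L'.length) : zvalAux k L < zvalAux k L' :=
  (hL.zvalAux_lt_fib hk).trans_le (hL'.fib_le_zvalAux hlen)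

theorem zvalAux_lt_iff (hL : IsZeckDigits L) (hL' : IsZeckDigits L') (hk : 2 ≤ k) :
    zvalAux k L < zvalAux k L' ↔
      L.length < L'.length ∨ L.length = L'.length ∧ L.reverse < L'.reverse := by
  rcases lt_trichotomy L.length L'.length with h | h | h
  · simp [h, zvalAux_lt_of_length_lt hL.1 hL' hk h]
  · simp [h, zvalAux_lt_iff_reverse_lt hk hL.1 hL'.1 h]
  · simp [h.not_gt, h.ne', (zvalAux_lt_of_length_lt hL'.1 hL hk h).not_gt]

theorem IsZeckDigits.eq_of_zvalAux_eq (hL : IsZeckDigits L) (hL' : IsZeckDigits L') (hk : 2 ≤ k)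
    (h : zvalAux k L = zvalAux k L') : L = L' := by
  by_contra hne
  have hlt := zvalAux_lt_iff hL hL' hk
  have hgt := zvalAux_lt_iff hL' hL hk
  rcases lt_trichotomy L.length L'.length with hlen | hlen | hlen
  · omega
  · rcases lt_or_gt_of_ne (mt reverse_inj.mp hne) with hrev | hrev
    · exact (hlt.mpr (.inr ⟨hlen, hrev⟩)).ne h
    · exact (hgt.mpr (.inr ⟨hlen.symm, hrev⟩)).ne h.symm
  · omega

end Digits

theorem ZeckRep.unique {n : ℕ} {L L' : List Bool} (h : ZeckRep n L) (h' : ZeckRep n L') :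
    L = L' :=
  IsZeckDigits.eq_of_zvalAux_eq h.2 h'.2 le_rfl (h.1.trans h'.1.symm)

theorem zvalAux_replicate_false_append_true (k j : ℕ) :
    zvalAux k (replicate j false ++ [true]) = fib (k + j) := by
  induction j generalizing k with
  | zero => simp [zvalAux]
  | succ j ih => simp [replicate_succ, zvalAux, ih, Nat.add_assoc, Nat.add_comm 1 j]

theorem noConsecutiveOnes_append_replicate_false_append_true {S : List Bool}
    (hS : NoConsecutiveOnes S) {j : ℕ} (hj : S ≠ [] → 1 ≤ j) :
    NoConsecutiveOnes (S ++ (replicate j false ++ [true])) := by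
  refine isChain_append.mpr ⟨hS, ?_, fun x hx y hy => ?_⟩
  · clear hj
    induction j with
    | zero => simp
    | succ j ih => exact isChain_cons.mpr ⟨fun _ _ => by simp, ih⟩
  · have hS : S ≠ [] := by rintro rfl; simp at hx
    obtain ⟨j, rfl⟩ : ∃ i, j = i + 1 := ⟨j - 1, by have := hj hS; omega⟩
    simp [replicate_succ] at hy
    simp [← hy]

/-- Greedy construction: subtract the largest Fibonacci number `fib k ≤ n`; the remainder is
smaller than `fib (k - 1)`, so its representation leaves room for a `0` below the new top
digit. -/
theorem exists_zeckRep (n : ℕ) : ∃ L, ZeckRep n L := by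
  induction n using Nat.strong_induction_on with
  | _ n ih =>
  rcases Nat.eq_zero_or_pos n with rfl | hn
  · exact ⟨[], rfl, isChain_nil, by simp⟩
  set k := greatestFib n
  have hk : 2 ≤ k := le_greatestFib.mpr (by rw [fib_two]; omega)
  have hfib_le : fib k ≤ n := fib_greatestFib_le n
  have hlt : n < fib (k + 1) := lt_fib_greatestFib_add_one n
  have hsucc : fib (k + 1) = fib (k - 1) + fib k := by
    rw [show k + 1 = k - 1 + 2 by omega, fib_add_two, show k - 1 + 1 = k by omega]
  have hfib_pos : 0 < fib k := fib_pos.mpr (by omega)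
  obtain ⟨S, hSval, hS, hSlast⟩ := ih (n - fib k) (by omega)
  have hSlen : S ≠ [] → S.length + 3 ≤ k := fun hne => by
    have hle : fib (2 + (S.length - 1)) ≤ zval S :=
      IsZeckDigits.fib_le_zvalAux ⟨hS, hSlast⟩ (by have := length_pos_of_ne_nil hne; omega)
    have : fib (2 + (S.length - 1)) < fib (k - 1) := by omega
    have := (fib_lt_fib (by omega)).mp this
    omega
  refine ⟨S ++ (replicate (k - 2 - S.length) false ++ [true]), ?_,
    noConsecutiveOnes_append_replicate_false_append_true hS
      (fun hne => by have := hSlen hne; omega), by simp⟩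
  rw [zval, zvalAux_append, zvalAux_replicate_false_append_true]
  have : 2 + S.length + (k - 2 - S.length) = k := by
    rcases eq_or_ne S [] with rfl | hne
    · simp; omega
    · have := hSlen hne; omega
  rw [this]
  change zval S + fib k = n
  omega

theorem isZeckDigits_false_cons {L : List Bool} :
    IsZeckDigits (false :: L) ↔ L ≠ [] ∧ IsZeckDigits L := by
  cases L with
  | nil => simp [IsZeckDigits]
  | cons d L => simp [IsZeckDigits, NoConsecutiveOnes, isChain_cons_cons]

theorem isZeckDigits_true_false_cons {L : List Bool} :
    IsZeckDigits (true :: false :: L) ↔ IsZeckDigits (false :: L) := by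
  simp [IsZeckDigits, NoConsecutiveOnes, isChain_cons_cons]

theorem zval_false_cons (L : List Bool) : zval (false :: L) = zvalAux 3 L := by
  simp [zval, zvalAux]

theorem zval_true_false_cons (L : List Bool) :
    zval (true :: false :: L) = zval (false :: L) + zval L + 1 := by
  simp [zval, zvalAux, zvalAux_add_two 2 L]
  omega

/-- The pair `(A m, B m)` with `rep_F m = L`:
`rep_F a = rep_F m · 0` and `rep_F b = rep_F m · 01`. -/
def IsK1Pair (a b : ℕ) : Prop :=
  ∃ L : List Bool, ZeckRep a (false :: L) ∧ ZeckRep b (true :: false :: L)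

theorem isK1Pair_iff {a b : ℕ} : IsK1Pair a b ↔
    ∃ L, L ≠ [] ∧ IsZeckDigits L ∧ zvalAux 3 L = a ∧ b = a + zval L + 1 := by
  constructor
  · rintro ⟨L, ⟨rfl, ha⟩, ⟨rfl, -⟩⟩
    obtain ⟨hne, hL⟩ := isZeckDigits_false_cons.mp ha
    exact ⟨L, hne, hL, (zval_false_cons L).symm, zval_true_false_cons L⟩
  · rintro ⟨L, hne, hL, rfl, rfl⟩
    have ha := isZeckDigits_false_cons.mpr ⟨hne, hL⟩
    refine ⟨L, ⟨zval_false_cons L, ha⟩, ?_, isZeckDigits_true_false_cons.mpr ha⟩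
    rw [zval_true_false_cons, zval_false_cons]

namespace IsK1Pair

variable {a b a' b' : ℕ}

theorem two_le_and_add_two_le (h : IsK1Pair a b) : 2 ≤ a ∧ a + 2 ≤ b := by
  obtain ⟨L, hne, hL, rfl, rfl⟩ := isK1Pair_iff.mp h
  have hpos := length_pos_of_ne_nil hne
  have h3 : fib (3 + 0) ≤ zvalAux 3 L := hL.fib_le_zvalAux hpos
  have h2 : fib (2 + 0) ≤ zval L := hL.fib_le_zvalAux hpos
  simp only [Nat.add_zero, fib_two] at h2 h3
  have : fib 3 = 2 := rfl
  omega

theorem snd_unique (h : IsK1Pair a b) (h' : IsK1Pair a b') : b = b' := by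
  obtain ⟨L, ha, hb⟩ := h
  obtain ⟨L', ha', hb'⟩ := h'
  obtain rfl := (cons_inj_right false).mp (ha.unique ha')
  exact hb.1.symm.trans hb'.1

theorem fst_unique (h : IsK1Pair a b) (h' : IsK1Pair a' b) : a = a' := by
  obtain ⟨L, ha, hb⟩ := h
  obtain ⟨L', ha', hb'⟩ := h'
  obtain rfl := (cons_inj_right false).mp ((cons_inj_right true).mp (hb.unique hb'))
  exact ha.1.symm.trans ha'.1

theorem fst_ne_snd (h : IsK1Pair a b) (h' : IsK1Pair a' b') : a ≠ b' := by
  rintro rfl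
  obtain ⟨L, ha, -⟩ := h
  obtain ⟨L', -, hb'⟩ := h'
  simpa using ha.unique hb'

theorem fst_eq_of_sub_eq (h : IsK1Pair a b) (h' : IsK1Pair a' b') (hd : b - a = b' - a') :
    a = a' := by
  obtain ⟨L, -, hL, rfl, rfl⟩ := isK1Pair_iff.mp h
  obtain ⟨L', -, hL', rfl, rfl⟩ := isK1Pair_iff.mp h'
  rw [hL.eq_of_zvalAux_eq hL' le_rfl (by simp only [zval] at hd; omega)]

/-- The shift of digit weights `F_i ↦ F_{i+1}` is strictly monotone on Zeckendorf
representations. -/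
theorem fst_lt_of_sub_lt (h : IsK1Pair a b) (h' : IsK1Pair a' b') (hd : b' - a' < b - a) :
    a' < a := by
  obtain ⟨L, -, hL, rfl, rfl⟩ := isK1Pair_iff.mp h
  obtain ⟨L', -, hL', rfl, rfl⟩ := isK1Pair_iff.mp h'
  have : zval L' < zval L := by omega
  exact ((zvalAux_lt_iff hL' hL le_rfl).trans (zvalAux_lt_iff hL' hL (by norm_num)).symm).mp this

end IsK1Pair

theorem exists_isK1Pair_add {d : ℕ} (hd : 2 ≤ d) : ∃ a, IsK1Pair a (a + d) := by
  obtain ⟨L, hval, hL⟩ := exists_zeckRep (d - 1)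
  have hne : L ≠ [] := by rintro rfl; simp [zval, zvalAux] at hval; omega
  exact ⟨zvalAux 3 L, isK1Pair_iff.mpr ⟨L, hne, hL, rfl, by omega⟩⟩

theorem exists_isK1Pair_of_two_le {x : ℕ} (hx : 2 ≤ x) :
    (∃ b, IsK1Pair x b) ∨ ∃ a, IsK1Pair a x := by
  obtain ⟨R, hval, hR⟩ := exists_zeckRep x
  match R, hR with
  | [], _ => simp [zval, zvalAux] at hval; omega
  | [true], _ => simp [zval, zvalAux] at hval; omega
  | true :: true :: _, hR => exact absurd (isChain_cons_cons.mp hR.1).1 (by simp)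
  | false :: L, hR =>
    exact .inl ⟨_, L, ⟨hval, hR⟩, ⟨rfl, isZeckDigits_true_false_cons.mpr hR⟩⟩
  | true :: false :: L, hR =>
    exact .inr ⟨_, L, ⟨rfl, isZeckDigits_true_false_cons.mp hR⟩, ⟨hval, hR⟩⟩

def IsKernel {α : Type*} (r : α → α → Prop) (K : Set α) : Prop :=
  (∀ p ∈ K, ∀ q ∈ K, ¬ r p q) ∧ ∀ v ∉ K, ∃ p ∈ K, r v p

theorem IsKernel.eq_of_wellFounded {α : Type*} {r : α → α → Prop}
    (hwf : WellFounded (flip r))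
    {K K' : Set α} (hK : IsKernel r K) (hK' : IsKernel r K') : K = K' := by
  ext v
  induction v using hwf.induction with
  | _ v ih =>
    constructor
    · intro hv
      by_contra hv'
      obtain ⟨q, hq, hvq⟩ := hK'.2 v hv'
      exact hK.1 v hv q ((ih q hvq).mpr hq) hvq
    · intro hv'
      by_contra hv
      obtain ⟨q, hq, hvq⟩ := hK.2 v hv
      exact hK'.1 v hv' q ((ih q hvq).mp hq) hvq

namespace K1Move

theorem mk_iff {x y x' y' : ℕ} : K1Move (x, y) (x', y') ↔ 1 < x + y ∧
    ((x' = x ∧ y' < y) ∨ (x' < x ∧ y' = y) ∨ (x' < x ∧ y' < y ∧ x - x' = y - y')) :=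
  Iff.rfl

theorem swap {p q : ℕ × ℕ} (h : K1Move p q) : K1Move p.swap q.swap := by
  unfold K1Move at h ⊢
  simp only [Prod.fst_swap, Prod.snd_swap]
  omega

theorem sum_lt {p q : ℕ × ℕ} (h : K1Move p q) : q.1 + q.2 < p.1 + p.2 := by
  unfold K1Move at h
  omega

theorem wellFounded_flip : WellFounded (flip K1Move) :=
  Subrelation.wf (fun h => sum_lt h) (InvImage.wf (fun p : ℕ × ℕ => p.1 + p.2) wellFounded_lt)

end K1Move

def k1PSet : Set (ℕ × ℕ) := {p | p.1 + p.2 ≤ 1 ∨ IsK1Pair p.1 p.2 ∨ IsK1Pair p.2 p.1}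

theorem mk_mem_k1PSet {x y : ℕ} :
    (x, y) ∈ k1PSet ↔ x + y ≤ 1 ∨ IsK1Pair x y ∨ IsK1Pair y x :=
  Iff.rfl

theorem swap_mem_k1PSet {p : ℕ × ℕ} (h : p ∈ k1PSet) : p.swap ∈ k1PSet := by
  rcases h with h | h | h
  · exact .inl (by simp only [Prod.fst_swap, Prod.snd_swap]; omega)
  · exact .inr (.inr h)
  · exact .inr (.inl h)

theorem not_k1Move_of_isK1Pair {a b : ℕ} (h : IsK1Pair a b) {q : ℕ × ℕ} (hq : q ∈ k1PSet) :
    ¬ K1Move (a, b) q := by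
  obtain ⟨c, d⟩ := q
  rintro ⟨-, hmove⟩
  simp only at hmove
  have hab := h.two_le_and_add_two_le
  rcases mk_mem_k1PSet.mp hq with hq | hq | hq
  · omega
  · have hcd := hq.two_le_and_add_two_le
    rcases hmove with ⟨rfl, h2⟩ | ⟨h1, rfl⟩ | ⟨h1, h2, h3⟩
    · exact h2.ne (h.snd_unique hq).symm
    · exact h1.ne (h.fst_unique hq).symm
    · exact h1.ne (h.fst_eq_of_sub_eq hq (by omega)).symm
  · have hdc := hq.two_le_and_add_two_le
    rcases hmove with ⟨rfl, -⟩ | ⟨-, rfl⟩ | ⟨h1, h2, h3⟩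
    · exact h.fst_ne_snd hq rfl
    · exact hq.fst_ne_snd h rfl
    · omega

theorem k1PSet_stable : ∀ p ∈ k1PSet, ∀ q ∈ k1PSet, ¬ K1Move p q := by
  rintro ⟨x, y⟩ (hp | hp | hp) q hq hmove
  · exact absurd hmove.1 (by simpa using hp)
  · exact not_k1Move_of_isK1Pair hp hq hmove
  · exact not_k1Move_of_isK1Pair hp (swap_mem_k1PSet hq) hmove.swap

theorem exists_k1Move_of_isK1Pair {x y b : ℕ} (hx : IsK1Pair x b) (hxy : x ≤ y)
    (hyb : y ≠ b) : ∃ p ∈ k1PSet, K1Move (x, y) p := by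
  have := hx.two_le_and_add_two_le
  rcases Nat.lt_or_gt_of_ne hyb with hyb | hyb
  · obtain hd | hd := lt_or_ge (y - x) 2
    · exact ⟨(0, y - x), .inl (by simp only; omega), K1Move.mk_iff.mpr (by omega)⟩
    · obtain ⟨a, ha⟩ := exists_isK1Pair_add hd
      have := hx.fst_lt_of_sub_lt ha (by omega)
      exact ⟨(a, a + (y - x)), .inr (.inl ha), K1Move.mk_iff.mpr (by omega)⟩
  · exact ⟨(x, b), .inr (.inl hx), K1Move.mk_iff.mpr (by omega)⟩

theorem exists_k1Move_of_le {x y : ℕ} (hxy : x ≤ y) (hv : (x, y) ∉ k1PSet) :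
    ∃ p ∈ k1PSet, K1Move (x, y) p := by
  have hsum : 2 ≤ x + y := by by_contra h; exact hv (.inl (by simp only; omega))
  obtain hx | hx := lt_or_ge x 2
  · exact ⟨(x, 1 - x), .inl (by simp only; omega), K1Move.mk_iff.mpr (by omega)⟩
  obtain ⟨b, hb⟩ | ⟨a, ha⟩ := exists_isK1Pair_of_two_le hx
  · exact exists_k1Move_of_isK1Pair hb hxy (by rintro rfl; exact hv (.inr (.inl hb)))
  · have := ha.two_le_and_add_two_le
    exact ⟨(x, a), .inr (.inr ha), K1Move.mk_iff.mpr (by omega)⟩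

theorem isKernel_k1PSet : IsKernel K1Move k1PSet := by
  refine ⟨k1PSet_stable, fun v hv => ?_⟩
  rcases le_total v.1 v.2 with h | h
  · exact exists_k1Move_of_le h hv
  · obtain ⟨p, hp, hmove⟩ := exists_k1Move_of_le h (fun h' => hv (swap_mem_k1PSet h'))
    exact ⟨p.swap, swap_mem_k1PSet hp, hmove.swap⟩

/-- Characterization of the P-positions of `K¹` (given by the unique stable and
    absorbing set for its move relation): a non-terminal position `(a,b)` with
    `a ≤ b` is a P-position iff `rep_F a` ends in `0` and
    `rep_F b = rep_F a · 1`. -/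
theorem K1_ppositions (P : Set (ℕ × ℕ))
    (hstable : ∀ p ∈ P, ∀ q ∈ P, ¬ K1Move p q)
    (habsorbing : ∀ v : ℕ × ℕ, v ∉ P → ∃ p ∈ P, K1Move v p)
    (a b : ℕ) (hab : a ≤ b) (hsum : 2 ≤ a + b) :
    (a, b) ∈ P ↔
      ∃ L : List Bool, ZeckRep a (false :: L) ∧ ZeckRep b (true :: false :: L) := by
  obtain rfl : P = k1PSet :=
    IsKernel.eq_of_wellFounded K1Move.wellFounded_flip ⟨hstable, habsorbing⟩ isKernel_k1PSet
  refine ⟨fun h => ?_, fun h => .inr (.inl h)⟩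
  rcases h with h | h | h
  · simp only at h; omega
  · exact h
  · have := h.two_le_and_add_two_le; omega
end

section
/- The set R₂ := {(0,0)} ∪ {(n, 2n+1), (2n+1, n) : n ≥ 0} ∪ {(2⌊nφ⌋+2, 2⌊nφ²⌋+2), (2⌊nφ²⌋+2, 2⌊nφ⌋+2) : n ≥ 0} is 'blocking-stable' for one blocked option: for every (p,q) ∈ R₂ with (p,q) ≠ (0,0), there is at most one Wythoff option of (p,q) lying in R₂. -/
/-- `(r,s)` is a Wythoff option of `(p,q)`. -/
def WOpt (p q : ℕ × ℕ) : Prop :=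
  (q.1 = p.1 ∧ q.2 < p.2) ∨ (q.1 < p.1 ∧ q.2 = p.2) ∨
  (q.1 < p.1 ∧ q.2 < p.2 ∧ p.1 - q.1 = p.2 - q.2)

/-- The claimed set of P-positions of the blocking game `W²`. -/
noncomputable def R2 : Set (ℕ × ℕ) :=
  {(0, 0)} ∪
  {p : ℕ × ℕ | ∃ n : ℕ, p = (n, 2 * n + 1) ∨ p = (2 * n + 1, n)} ∪
  {p : ℕ × ℕ | ∃ n : ℕ,
    p = (2 * ⌊(n : ℝ) * phi⌋₊ + 2, 2 * ⌊(n : ℝ) * phi ^ 2⌋₊ + 2) ∨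
    p = (2 * ⌊(n : ℝ) * phi ^ 2⌋₊ + 2, 2 * ⌊(n : ℝ) * phi⌋₊ + 2)}

/-!
Besides `(0, 0)`, `R₂` consists of the points `(n, 2n+1)` and their mirror images, and of the
points `(2a+2, 2b+2)` for the P-positions `(a, b)` of Wythoff's game. Since `R₂` and the option
relation are symmetric, it suffices to treat `(n, 2n+1)` and `(2aₙ+2, 2bₙ+2)` with `aₙ = ⌊nφ⌋`,
`bₙ = ⌊nφ²⌋ = aₙ + n`. The options of `(n, 2n+1)` lying in `R₂` all lie in its column, where `R₂`
has only one point below `(n, 2n+1)` because the Wythoff P-positions meet every column at most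
once. The options of `(2aₙ+2, 2bₙ+2)` in `R₂` must lie on its diagonal, since the Wythoff
P-positions meet every column and row at most once; on that diagonal the only point of `R₂` below
it is `(2n-1, 4n-1)`, since the Wythoff P-positions also meet every diagonal at most once. These
uniqueness properties come from Rayleigh's theorem for the complementary Beatty sequences of `φ`
and `φ²`.
-/

open Real

lemma phi_eq_goldenRatio : phi = goldenRatio := rfl

lemma holderConjugate_phi_phi_sq : phi.HolderConjugate (phi ^ 2) := by
  rw [phi_eq_goldenRatio, Real.holderConjugate_iff, ← inv_pow, inv_goldenRatio, neg_sq,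
    goldenConj_sq]
  exact ⟨one_lt_goldenRatio, by ring⟩

lemma beattySeq_natCast {r : ℝ} (hr : 0 ≤ r) (n : ℕ) : beattySeq r n = ⌊(n : ℝ) * r⌋₊ := by
  rw [beattySeq, Int.natCast_floor_eq_floor (by positivity), Int.cast_natCast]

noncomputable def lowerWythoff (n : ℕ) : ℕ := ⌊(n : ℝ) * phi⌋₊

lemma lowerWythoff_zero : lowerWythoff 0 = 0 := by
  simp [lowerWythoff]

lemma natFloor_mul_phi_sq (n : ℕ) : ⌊(n : ℝ) * phi ^ 2⌋₊ = lowerWythoff n + n := by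
  rw [phi_eq_goldenRatio, goldenRatio_sq, mul_add, mul_one, Nat.floor_add_natCast (by positivity)]
  rfl

lemma le_lowerWythoff (n : ℕ) : n ≤ lowerWythoff n :=
  Nat.le_floor <| le_mul_of_one_le_right n.cast_nonneg one_lt_goldenRatio.le

lemma lowerWythoff_strictMono : StrictMono lowerWythoff := by
  refine strictMono_nat_of_lt_succ fun n => ?_
  have hφ : 1 ≤ phi := one_lt_goldenRatio.le
  calc lowerWythoff n < ⌊(n : ℝ) * phi + 1⌋₊ := by
        rw [Nat.floor_add_one (by positivity)]; exact Nat.lt_succ_self _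
    _ ≤ lowerWythoff (n + 1) := Nat.floor_mono (by push_cast; linarith)

lemma lowerWythoff_inj {j k : ℕ} : lowerWythoff j = lowerWythoff k ↔ j = k :=
  lowerWythoff_strictMono.injective.eq_iff

lemma lowerWythoff_add_self_inj {j k : ℕ} :
    lowerWythoff j + j = lowerWythoff k + k ↔ j = k :=
  (lowerWythoff_strictMono.add strictMono_id).injective.eq_iff

lemma lowerWythoff_ne_add_self {j k : ℕ} (hj : 0 < j) (hk : 0 < k) :
    lowerWythoff j ≠ lowerWythoff k + k := by
  intro h
  have hpos : (lowerWythoff j : ℤ) ∈ {n : ℤ | 0 < n} := by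
    have := le_lowerWythoff j
    simp only [Set.mem_ofPred_eq]
    omega
  rw [← (goldenRatio_irrational : Irrational phi).beattySeq_symmDiff_beattySeq_pos
    holderConjugate_phi_phi_sq, Set.mem_symmDiff] at hpos
  rcases hpos with ⟨-, hnot⟩ | ⟨-, hnot⟩
  · refine hnot ⟨k, by exact_mod_cast hk, ?_⟩
    rw [beattySeq_natCast (by positivity), natFloor_mul_phi_sq, h]
  · exact hnot ⟨j, by exact_mod_cast hj, beattySeq_natCast goldenRatio_pos.le j⟩

lemma lowerWythoff_eq_add_self_iff {j k : ℕ} :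
    lowerWythoff j = lowerWythoff k + k ↔ j = 0 ∧ k = 0 := by
  refine ⟨fun h => ?_, fun ⟨hj, hk⟩ => by simp [hj, hk]⟩
  have := le_lowerWythoff j
  have := lowerWythoff_zero
  rcases Nat.eq_zero_or_pos j with rfl | hj
  · omega
  rcases Nat.eq_zero_or_pos k with rfl | hk
  · omega
  exact absurd h (lowerWythoff_ne_add_self hj hk)

/-- The P-positions of Wythoff's game. -/
def wythoffPairs : Set (ℕ × ℕ) :=
  {p | ∃ n, p = (lowerWythoff n, lowerWythoff n + n) ∨ p = (lowerWythoff n + n, lowerWythoff n)}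

lemma swap_mem_wythoffPairs {p : ℕ × ℕ} (h : p ∈ wythoffPairs) : p.swap ∈ wythoffPairs := by
  obtain ⟨n, rfl | rfl⟩ := h
  exacts [⟨n, Or.inr rfl⟩, ⟨n, Or.inl rfl⟩]

lemma snd_le_two_mul_fst_of_mem_wythoffPairs {x y : ℕ} (h : (x, y) ∈ wythoffPairs) :
    y ≤ 2 * x := by
  obtain ⟨n, h | h⟩ := h <;> simp only [Prod.mk.injEq] at h <;> have := le_lowerWythoff n <;> omega

lemma snd_eq_of_mem_wythoffPairs {x y y' : ℕ} (h : (x, y) ∈ wythoffPairs)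
    (h' : (x, y') ∈ wythoffPairs) : y = y' := by
  obtain ⟨k, h | h⟩ := h <;> obtain ⟨k', h' | h'⟩ := h' <;>
    simp only [Prod.mk.injEq] at h h' <;>
    have := @lowerWythoff_inj k k' <;> have := @lowerWythoff_add_self_inj k k' <;>
    have := @lowerWythoff_eq_add_self_iff k k' <;> have := @lowerWythoff_eq_add_self_iff k' k <;>
    omega

lemma fst_eq_of_mem_wythoffPairs {x x' y : ℕ} (h : (x, y) ∈ wythoffPairs)
    (h' : (x', y) ∈ wythoffPairs) : x = x' :=
  snd_eq_of_mem_wythoffPairs (swap_mem_wythoffPairs h) (swap_mem_wythoffPairs h')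

lemma eq_lowerWythoff_of_mem_wythoffPairs {x n : ℕ} (h : (x, x + n) ∈ wythoffPairs) :
    x = lowerWythoff n := by
  obtain ⟨k, h | h⟩ := h <;> simp only [Prod.mk.injEq] at h
  · obtain rfl : k = n := by omega
    exact h.1
  · obtain ⟨rfl, rfl⟩ : k = 0 ∧ n = 0 := by omega
    simpa [lowerWythoff_zero] using h.1

lemma mem_R2_iff {p : ℕ × ℕ} :
    p ∈ R2 ↔ p = (0, 0) ∨ (∃ n, p = (n, 2 * n + 1) ∨ p = (2 * n + 1, n)) ∨
      ∃ x y, (x, y) ∈ wythoffPairs ∧ p = (2 * x + 2, 2 * y + 2) := by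
  simp only [R2, Set.mem_union, Set.mem_singleton_iff, Set.mem_ofPred_eq, natFloor_mul_phi_sq,
    or_assoc, wythoffPairs]
  refine or_congr_right (or_congr_right ⟨?_, ?_⟩)
  · rintro ⟨n, rfl | rfl⟩
    exacts [⟨_, _, ⟨n, Or.inl rfl⟩, rfl⟩, ⟨_, _, ⟨n, Or.inr rfl⟩, rfl⟩]
  · rintro ⟨x, y, ⟨n, h | h⟩, rfl⟩ <;> simp only [Prod.mk.injEq] at h <;> rw [h.1, h.2]
    exacts [⟨n, Or.inl rfl⟩, ⟨n, Or.inr rfl⟩]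

lemma swap_mem_R2 {p : ℕ × ℕ} (h : p ∈ R2) : p.swap ∈ R2 := by
  rcases mem_R2_iff.1 h with rfl | ⟨n, rfl | rfl⟩ | ⟨x, y, hxy, rfl⟩
  exacts [mem_R2_iff.2 (Or.inl rfl), mem_R2_iff.2 (Or.inr (Or.inl ⟨n, Or.inr rfl⟩)),
    mem_R2_iff.2 (Or.inr (Or.inl ⟨n, Or.inl rfl⟩)),
    mem_R2_iff.2 (Or.inr (Or.inr ⟨y, x, swap_mem_wythoffPairs hxy, rfl⟩))]

lemma WOpt.swap {p q : ℕ × ℕ} (h : WOpt p q) : WOpt p.swap q.swap := by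
  rcases h with ⟨h₁, h₂⟩ | ⟨h₁, h₂⟩ | ⟨h₁, h₂, h₃⟩
  exacts [Or.inr (Or.inl ⟨h₂, h₁⟩), Or.inl ⟨h₂, h₁⟩, Or.inr (Or.inr ⟨h₂, h₁, h₃.symm⟩)]

lemma mem_R2_of_fst_le {p : ℕ × ℕ} (hp : p ∈ R2) (hle : p.1 ≤ p.2) :
    p = (0, 0) ∨ (∃ n, p = (n, 2 * n + 1)) ∨
      ∃ n, p = (2 * lowerWythoff n + 2, 2 * (lowerWythoff n + n) + 2) := by
  rcases mem_R2_iff.1 hp with rfl | ⟨n, rfl | rfl⟩ | ⟨x, y, ⟨n, h | h⟩, rfl⟩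
  · exact Or.inl rfl
  · exact Or.inr (Or.inl ⟨n, rfl⟩)
  · simp only at hle; omega
  · obtain ⟨rfl, rfl⟩ := Prod.mk.inj h
    exact Or.inr (Or.inr ⟨n, rfl⟩)
  · simp only [Prod.mk.injEq] at h hle
    obtain rfl : n = 0 := by omega
    exact Or.inr (Or.inr ⟨0, by simp [h]⟩)

lemma eq_of_mem_R2_of_fst_eq {q q' : ℕ × ℕ} (hq : q ∈ R2) (hq' : q' ∈ R2) (h : q.1 = q'.1)
    (hlt : q.2 < 2 * q.1 + 1) (hlt' : q'.2 < 2 * q'.1 + 1) : q = q' := by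
  rcases mem_R2_iff.1 hq with rfl | ⟨m, rfl | rfl⟩ | ⟨x, y, hxy, rfl⟩ <;>
    rcases mem_R2_iff.1 hq' with rfl | ⟨m', rfl | rfl⟩ | ⟨x', y', hxy', rfl⟩ <;>
    simp only [Prod.mk.injEq] at h hlt hlt' ⊢ <;> try omega
  obtain rfl : x = x' := by omega
  exact ⟨rfl, by rw [snd_eq_of_mem_wythoffPairs hxy hxy']⟩

lemma fst_eq_of_wOpt_of_mem_R2 {n : ℕ} {q : ℕ × ℕ} (h : WOpt (n, 2 * n + 1) q) (hq : q ∈ R2) :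
    q.1 = n ∧ q.2 < 2 * n + 1 := by
  rcases mem_R2_iff.1 hq with rfl | ⟨m, rfl | rfl⟩ | ⟨x, y, hxy, rfl⟩ <;>
    unfold WOpt at h <;> simp only at h ⊢ <;> try omega
  have := snd_le_two_mul_fst_of_mem_wythoffPairs hxy
  omega

-- For `n = 0` truncated subtraction makes this `(0, 0)`, the only option of `(2, 2)` in `R2`.
lemma eq_of_wOpt_of_mem_R2 {n : ℕ} {q : ℕ × ℕ}
    (h : WOpt (2 * lowerWythoff n + 2, 2 * (lowerWythoff n + n) + 2) q) (hq : q ∈ R2) :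
    q = (2 * n - 1, 4 * n - 1) := by
  have := le_lowerWythoff n
  have hn : (lowerWythoff n, lowerWythoff n + n) ∈ wythoffPairs := ⟨n, Or.inl rfl⟩
  rcases mem_R2_iff.1 hq with rfl | ⟨m, rfl | rfl⟩ | ⟨x, y, hxy, rfl⟩ <;>
    unfold WOpt at h <;> simp only [Prod.mk.injEq] at h ⊢ <;> try omega
  rcases h with ⟨hx, hy⟩ | ⟨hx, hy⟩ | ⟨hx, hy, hd⟩
  · rw [snd_eq_of_mem_wythoffPairs hxy (by rwa [show x = lowerWythoff n by omega])] at hy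
    omega
  · rw [fst_eq_of_mem_wythoffPairs hxy (by rwa [show y = lowerWythoff n + n by omega])] at hx
    omega
  · rw [show y = x + n by omega] at hxy
    have := eq_lowerWythoff_of_mem_wythoffPairs hxy
    omega

/-- Blocking-stability of `R₂`: every nonzero position of `R₂` has at most
    one Wythoff option in `R₂`. -/
theorem R2_blocking_stable :
    ∀ p ∈ R2, p ≠ (0, 0) →
      ∀ q₁ ∈ R2, ∀ q₂ ∈ R2, WOpt p q₁ → WOpt p q₂ → q₁ = q₂ := by
  intro p hp hp0 q₁ hq₁ q₂ hq₂ h₁ h₂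
  wlog hle : p.1 ≤ p.2 generalizing p q₁ q₂
  · have hp0' : p.swap ≠ (0, 0) := by simpa [Prod.ext_iff, and_comm] using hp0
    have hle' : p.swap.1 ≤ p.swap.2 := by simp only [Prod.fst_swap, Prod.snd_swap]; omega
    exact Prod.swap_injective <| this p.swap (swap_mem_R2 hp) hp0' q₁.swap (swap_mem_R2 hq₁)
      q₂.swap (swap_mem_R2 hq₂) h₁.swap h₂.swap hle'
  rcases mem_R2_of_fst_le hp hle with rfl | ⟨n, rfl⟩ | ⟨n, rfl⟩
  · exact absurd rfl hp0
  · obtain ⟨e₁, lt₁⟩ := fst_eq_of_wOpt_of_mem_R2 h₁ hq₁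
    obtain ⟨e₂, lt₂⟩ := fst_eq_of_wOpt_of_mem_R2 h₂ hq₂
    exact eq_of_mem_R2_of_fst_eq hq₁ hq₂ (e₁.trans e₂.symm) (by omega) (by omega)
  · rw [eq_of_wOpt_of_mem_R2 h₁ hq₁, eq_of_wOpt_of_mem_R2 h₂ hq₂]
end

section
/- The set R₃ := {(0,0)} ∪ {(n, 2n+1), (2n+1, n), (n, 2n+2), (2n+2, n) : n ≥ 0} satisfies: (i) every (p,q) ∈ R₃ has at most two Wythoff options in R₃; and (ii) every (p,q) ∈ ℕ² not in R₃ has at least three distinct Wythoff options in R₃. -/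
/-- The claimed set of P-positions of the blocking game `W³`. -/
def R3 : Set (ℕ × ℕ) :=
  {(0, 0)} ∪
  {p : ℕ × ℕ | ∃ n : ℕ, p = (n, 2 * n + 1) ∨ p = (2 * n + 1, n) ∨
    p = (n, 2 * n + 2) ∨ p = (2 * n + 2, n)}

/-- Arithmetic characterization of membership in `R3`. -/
def inR (a b : ℕ) : Prop :=
  (a = 0 ∧ b = 0) ∨ b = 2 * a + 1 ∨ b = 2 * a + 2 ∨ a = 2 * b + 1 ∨ a = 2 * b + 2

/-- Arithmetic form of `WOpt`. -/
def wopt (a b c d : ℕ) : Prop :=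
  (c = a ∧ d < b) ∨ (c < a ∧ d = b) ∨ (c < a ∧ d < b ∧ a - c = b - d)

lemma wopt_iff (a b c d : ℕ) : WOpt (a, b) (c, d) ↔ wopt a b c d := Iff.rfl

lemma mem_R3_iff (a b : ℕ) : (a, b) ∈ R3 ↔ inR a b := by
  simp only [R3, inR, Set.mem_union, Set.mem_singleton_iff, Set.mem_setOf_eq, Prod.mk.injEq]
  constructor
  · rintro (⟨h1, h2⟩ | ⟨n, h⟩) <;> omega
  · intro h
    rcases h with ⟨h1, h2⟩ | h | h | h | h
    · exact Or.inl ⟨h1, h2⟩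
    · exact Or.inr ⟨a, by omega⟩
    · exact Or.inr ⟨a, by omega⟩
    · exact Or.inr ⟨b, by omega⟩
    · exact Or.inr ⟨b, by omega⟩

lemma key (a b : ℕ) (hp : inR a b) :
    ∃ x1 x2 y1 y2 : ℕ, ∀ c d : ℕ, inR c d → WOpt (a, b) (c, d) →
      (c = x1 ∧ d = x2) ∨ (c = y1 ∧ d = y2) := by
  rcases hp with ⟨h1, h2⟩ | h | h | h | h
  · exact ⟨0, 0, 0, 0, fun c d hq hw => by
      rw [wopt_iff] at hw; unfold wopt at hw; omega⟩
  · exact ⟨a, (a - 1) / 2, a - 1, 2 * a, fun c d hq hw => by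
      rw [wopt_iff] at hw; unfold wopt at hw; unfold inR at hq; omega⟩
  · exact ⟨a, 2 * a + 1, a, (a - 1) / 2, fun c d hq hw => by
      rw [wopt_iff] at hw; unfold wopt at hw; unfold inR at hq; omega⟩
  · exact ⟨(b - 1) / 2, b, 2 * b, b - 1, fun c d hq hw => by
      rw [wopt_iff] at hw; unfold wopt at hw; unfold inR at hq; omega⟩
  · exact ⟨2 * b + 1, b, (b - 1) / 2, b, fun c d hq hw => by
      rw [wopt_iff] at hw; unfold wopt at hw; unfold inR at hq; omega⟩

lemma half (a b : ℕ) (hab : a ≤ b) (h1 : ¬(a = 0 ∧ b = 0)) (h2 : b ≠ 2 * a + 1)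
    (h3 : b ≠ 2 * a + 2) :
    ∃ c1 d1 c2 d2 c3 d3 : ℕ, inR c1 d1 ∧ inR c2 d2 ∧ inR c3 d3 ∧
      ¬(c1 = c2 ∧ d1 = d2) ∧ ¬(c1 = c3 ∧ d1 = d3) ∧ ¬(c2 = c3 ∧ d2 = d3) ∧
      wopt a b c1 d1 ∧ wopt a b c2 d2 ∧ wopt a b c3 d3 := by
  by_cases hbig : 2 * a + 3 ≤ b
  · refine ⟨a, 2 * a + 1, a, 2 * a + 2, a, (a - 1) / 2, ?_⟩
    unfold inR wopt; omega
  · by_cases hd : a = b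
    · refine ⟨a, (a - 1) / 2, (b - 1) / 2, b, 0, 0, ?_⟩
      unfold inR wopt; omega
    · refine ⟨a, (a - 1) / 2, (b - 1) / 2, b, b - a - 1, 2 * (b - a - 1) + 1, ?_⟩
      unfold inR wopt; omega

lemma inR_swap {a b : ℕ} (h : inR a b) : inR b a := by unfold inR at *; tauto

lemma wopt_swap {a b c d : ℕ} (h : wopt a b c d) : wopt b a d c := by
  unfold wopt at *; omega

/-- Every element of `R₃` has at most two Wythoff options in `R₃`, and every
    position outside `R₃` has at least three distinct Wythoff options in `R₃`. -/
theorem R3_blocking :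
    (∀ p ∈ R3, ∀ q₁ ∈ R3, ∀ q₂ ∈ R3, ∀ q₃ ∈ R3,
      WOpt p q₁ → WOpt p q₂ → WOpt p q₃ →
      q₁ = q₂ ∨ q₁ = q₃ ∨ q₂ = q₃) ∧
    (∀ p : ℕ × ℕ, p ∉ R3 →
      ∃ q₁ ∈ R3, ∃ q₂ ∈ R3, ∃ q₃ ∈ R3,
        q₁ ≠ q₂ ∧ q₁ ≠ q₃ ∧ q₂ ≠ q₃ ∧ WOpt p q₁ ∧ WOpt p q₂ ∧ WOpt p q₃) := by
  constructor
  · rintro ⟨a, b⟩ hp ⟨c1, d1⟩ hq1 ⟨c2, d2⟩ hq2 ⟨c3, d3⟩ hq3 hw1 hw2 hw3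
    rw [mem_R3_iff] at hp hq1 hq2 hq3
    obtain ⟨x1, x2, y1, y2, hK⟩ := key a b hp
    have e1 := hK c1 d1 hq1 hw1
    have e2 := hK c2 d2 hq2 hw2
    have e3 := hK c3 d3 hq3 hw3
    simp only [Prod.mk.injEq]
    omega
  · rintro ⟨a, b⟩ hp
    rw [mem_R3_iff] at hp
    unfold inR at hp
    push_neg at hp
    obtain ⟨h1, h2, h3, h4, h5⟩ := hp
    by_cases hab : a ≤ b
    · obtain ⟨c1, d1, c2, d2, c3, d3, m1, m2, m3, n1, n2, n3, w1, w2, w3⟩ :=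
        half a b hab (by tauto) h2 h3
      refine ⟨(c1, d1), (mem_R3_iff _ _).mpr m1, (c2, d2), (mem_R3_iff _ _).mpr m2,
        (c3, d3), (mem_R3_iff _ _).mpr m3, ?_, ?_, ?_, ?_, ?_, ?_⟩
      · simp only [ne_eq, Prod.mk.injEq]; exact n1
      · simp only [ne_eq, Prod.mk.injEq]; exact n2
      · simp only [ne_eq, Prod.mk.injEq]; exact n3
      · exact (wopt_iff a b c1 d1).mpr w1
      · exact (wopt_iff a b c2 d2).mpr w2
      · exact (wopt_iff a b c3 d3).mpr w3
    · obtain ⟨c1, d1, c2, d2, c3, d3, m1, m2, m3, n1, n2, n3, w1, w2, w3⟩ :=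
        half b a (by omega) (by tauto) h4 h5
      refine ⟨(d1, c1), (mem_R3_iff _ _).mpr (inR_swap m1), (d2, c2),
        (mem_R3_iff _ _).mpr (inR_swap m2), (d3, c3), (mem_R3_iff _ _).mpr (inR_swap m3),
        ?_, ?_, ?_, ?_, ?_, ?_⟩
      · simp only [ne_eq, Prod.mk.injEq]; tauto
      · simp only [ne_eq, Prod.mk.injEq]; tauto
      · simp only [ne_eq, Prod.mk.injEq]; tauto
      · exact (wopt_iff a b d1 c1).mpr (wopt_swap w1)
      · exact (wopt_iff a b d2 c2).mpr (wopt_swap w2)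
      · exact (wopt_iff a b d3 c3).mpr (wopt_swap w3)
end
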